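/- For every (ξ,μ) ∈ 𝒫 = (1.18,1.19) × (−10,−9), one has (ξ/2)·p_μ + (1 − ξ/2)·√(p_μ − μ) + (ξ − 1)·p̃_{ξ,μ} > 0; equivalently, the point z̃_{ξ,μ} = (ξ/2)·p_μ + (1 − ξ/2)·√(p_μ − μ) + ξ·p̃_{ξ,μ}, obtained by applying g_{ξ,μ}(y,z) = (μ + y², ξ·z + y) to the point of the line z = −(1/2)(y − p_μ) + p̃_{ξ,μ} with y = √(p_μ − μ), satisfies z̃_{ξ,μ} > p̃_{ξ,μ}. -/

import Mathlib

/-! Since `(ξ - 1) * p̃ = -p_μ`, the quantity equals `(1 - ξ/2) * (√(p_μ - μ) - p_μ)`, which is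
positive because `ξ < 2` and `p_μ < 0` for `μ < 0`. -/

open Set

noncomputable def pm (μ : ℝ) : ℝ := (1 - Real.sqrt (1 - 4 * μ)) / 2
noncomputable def ptilde (ξ μ : ℝ) : ℝ := pm μ / (1 - ξ)

theorem pm_neg {μ : ℝ} (hμ : μ < 0) : pm μ < 0 := by
  have : 1 < Real.sqrt (1 - 4 * μ) := (Real.lt_sqrt zero_le_one).2 (by linarith)
  unfold pm
  linarith

theorem sub_one_mul_ptilde {ξ : ℝ} (hξ : ξ ≠ 1) (μ : ℝ) : (ξ - 1) * ptilde ξ μ = -pm μ := by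
  have : 1 - ξ ≠ 0 := sub_ne_zero.2 hξ.symm
  unfold ptilde
  field_simp
  ring

theorem slope_line_image_sub_ptilde_pos {ξ μ : ℝ} (hξ₁ : ξ ≠ 1) (hξ₂ : ξ < 2) (hμ : μ < 0) :
    0 < (ξ / 2) * pm μ + (1 - ξ / 2) * Real.sqrt (pm μ - μ) + (ξ - 1) * ptilde ξ μ := by
  have hp := pm_neg hμ
  calc 0 < (1 - ξ / 2) * (Real.sqrt (pm μ - μ) - pm μ) :=
        mul_pos (by linarith) (by linarith [Real.sqrt_nonneg (pm μ - μ)])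
    _ = _ := by rw [sub_one_mul_ptilde hξ₁]; ring

theorem image_of_slope_line_above_fixed_height (ξ μ : ℝ)
    (hξ : ξ ∈ Ioo (1.18 : ℝ) 1.19) (hμ : μ ∈ Ioo (-10 : ℝ) (-9)) :
    (ξ / 2) * pm μ + (1 - ξ / 2) * Real.sqrt (pm μ - μ) + (ξ - 1) * ptilde ξ μ > 0 ∧
    (ξ / 2) * pm μ + (1 - ξ / 2) * Real.sqrt (pm μ - μ) + ξ * ptilde ξ μ > ptilde ξ μ := by
  obtain ⟨hξ₁, hξ₂⟩ := hξ
  have hpos := slope_line_image_sub_ptilde_pos (by linarith : (1 : ℝ) < ξ).ne' (by linarith)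
    (by linarith [hμ.2] : μ < 0)
  exact ⟨hpos, by linarith⟩
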